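/- (Graph distance is solved by the generalized Bellman–Ford algorithm with ⊕ = min, ⊗ = +.) For every natural number t and all vertices u, v : V, the (min, +) Bellman–Ford iterate equals the infimum over all walks of length at most t of the total edge length: d_t u v = ⨅_{k ∈ Finset.range (t+1)} ⨅ over all walks p of length k from u to v of ∑_{i=0}^{k-1} w (p i) (p (i+1)) (the empty sum for k = 0 is 0, and the infimum over an empty set of walks is ∞). -/

import Mathlib

open ENNReal

/-!
A walk with `k + 1` edges is a walk with `k` edges followed by one more edge, so the infimum
`W k u v` of the lengths of walks with exactly `k` edges satisfies
`W (k + 1) u v = ⨅ x, W k u x + w x v`. Since addition distributes over infima in `ℝ≥0∞`, the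
Bellman–Ford recursion is then satisfied by `⨅ k ≤ t, W k u v`.
-/

/-- The (min, +) generalized Bellman–Ford iterates for graph distance:
`d 0 u v = if u = v then 0 else ∞` and
`d (t+1) u v = min (⨅ x, d t u x + w x v) (d 0 u v)`. -/
noncomputable def minPlusBF {V : Type*} [Fintype V] [DecidableEq V]
    (w : Matrix V V ℝ≥0∞) : ℕ → V → V → ℝ≥0∞
  | 0 => fun u v => if u = v then 0 else ∞
  | t + 1 => fun u v =>
      min (⨅ x : V, minPlusBF w t u x + w x v) (if u = v then 0 else ∞)

section Walks

variable {V : Type*} (w : Matrix V V ℝ≥0∞)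

noncomputable def walkLength {k : ℕ} (p : Fin (k + 1) → V) : ℝ≥0∞ :=
  ∑ i : Fin k, w (p i.castSucc) (p i.succ)

noncomputable def infWalkLength (k : ℕ) (u v : V) : ℝ≥0∞ :=
  ⨅ p : {p : Fin (k + 1) → V // p 0 = u ∧ p (Fin.last k) = v}, walkLength w p.1

theorem walkLength_succ {k : ℕ} (p : Fin (k + 2) → V) :
    walkLength w p = walkLength w (Fin.init p) + w (p (Fin.last k).castSucc) (p (Fin.last _)) := by
  simp only [walkLength, Fin.sum_univ_castSucc, Fin.init, Fin.succ_last]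
  rfl

theorem walkLength_snoc {k : ℕ} (p : Fin (k + 1) → V) (v : V) :
    walkLength w (Fin.snoc p v : Fin (k + 2) → V) = walkLength w p + w (p (Fin.last k)) v := by
  rw [walkLength_succ, Fin.init_snoc, Fin.snoc_castSucc, Fin.snoc_last]

theorem infWalkLength_zero [DecidableEq V] (u v : V) :
    infWalkLength w 0 u v = if u = v then 0 else ∞ := by
  split_ifs with huv
  · subst huv
    exact nonpos_iff_eq_zero.1 (iInf_le_of_le ⟨fun _ => u, rfl, rfl⟩ (by simp [walkLength]))
  · have : IsEmpty {p : Fin 1 → V // p 0 = u ∧ p (Fin.last 0) = v} :=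
      ⟨fun ⟨_, hu, hv⟩ => huv (hu.symm.trans hv)⟩
    exact iInf_of_empty _

theorem infWalkLength_succ (k : ℕ) (u v : V) :
    infWalkLength w (k + 1) u v = ⨅ x, infWalkLength w k u x + w x v := by
  refine le_antisymm (le_iInf fun x => ?_) (le_iInf fun ⟨p, hu, hv⟩ => ?_)
  · simp only [infWalkLength, ENNReal.iInf_add]
    refine le_iInf fun ⟨q, hu, hx⟩ => iInf_le_of_le ⟨Fin.snoc q v, ?_, by simp⟩ ?_
    · rwa [← Fin.castSucc_zero, Fin.snoc_castSucc]
    · subst hx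
      rw [walkLength_snoc]
  · subst hu hv
    exact iInf_le_of_le (p (Fin.last k).castSucc) <|
      (add_le_add_left (iInf_le _ ⟨Fin.init p, rfl, rfl⟩) _).trans_eq (walkLength_succ w p).symm

end Walks

theorem minPlusBF_eq_inf_over_short_walks {V : Type*} [Fintype V] [DecidableEq V]
    (w : Matrix V V ℝ≥0∞) (t : ℕ) (u v : V) :
    minPlusBF w t u v =
      ⨅ k ∈ Finset.range (t + 1),
        ⨅ p : {p : Fin (k + 1) → V // p 0 = u ∧ p (Fin.last k) = v},
          ∑ i : Fin k, w (p.1 i.castSucc) (p.1 i.succ) := by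
  change minPlusBF w t u v = ⨅ k ∈ Finset.range (t + 1), infWalkLength w k u v
  simp_rw [Finset.mem_range]
  induction t generalizing v with
  | zero => simp [minPlusBF, infWalkLength_zero]
  | succ t ih =>
    simp only [minPlusBF]
    rw [Nat.iInf_lt_succ', infWalkLength_zero, inf_comm]
    congr 1
    calc ⨅ x, minPlusBF w t u x + w x v
        = ⨅ x, ⨅ k < t + 1, infWalkLength w k u x + w x v := by
          simp_rw [ih, ENNReal.iInf_add]
      _ = ⨅ k < t + 1, infWalkLength w (k + 1) u v := by
          simp_rw [infWalkLength_succ]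
          exact iInf_comm.trans (iInf_congr fun _ => iInf_comm)
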